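/- arXiv:1705.10802 — 2 statements merged into one kernel-verified Lean document; each statement's English description precedes it below -/
import Mathlib

section
/- Let (X, μ) be a measure space where X is a countable index set, each point π ∈ X has measure μ{π} = φ(π)² w(π) for positive weights w(π) > 0 and a positive function φ : X → (0,∞). Suppose K := sup_{s>0} s · ∑_{π : φ(π) ≥ s} w(π) < ∞. Then for every v > 0, ∑_{π : φ(π) ≤ v} φ(π)² w(π) ≤ 2 K v. -/
open scoped ENNReal
open MeasureTheory

lemma layer_cake_aux (a : ℝ) (ha : 0 ≤ a) :
    ∫⁻ s in Set.Ioc 0 a, ENNReal.ofReal s = ENNReal.ofReal (a ^ 2 / 2) := by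
  rw [← MeasureTheory.ofReal_integral_eq_lintegral_ofReal]
  · rw [← intervalIntegral.integral_of_le ha, integral_id]
    norm_num
  · have := (intervalIntegral.intervalIntegrable_id (μ := volume) (a := 0) (b := a))
    rw [intervalIntegrable_iff_integrableOn_Ioc_of_le ha] at this
    exact this
  · filter_upwards [self_mem_ae_restrict measurableSet_Ioc] with x hx
    exact le_of_lt hx.1

/-- Layer-cake estimate: if `K = sup_{s>0} s ∑_{φ(π) ≥ s} w(π) < ∞`, then for every
`v > 0`, `∑_{φ(π) ≤ v} φ(π)² w(π) ≤ 2 K v`. -/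
theorem layer_cake_estimate {X : Type*} [Countable X] (w φ : X → ℝ)
    (hw : ∀ π, 0 < w π) (hφ : ∀ π, 0 < φ π) (K : ℝ)
    (hK : ∀ s : ℝ, 0 < s →
      ENNReal.ofReal s * ∑' π : {π : X // s ≤ φ π}, ENNReal.ofReal (w π.1) ≤ ENNReal.ofReal K) :
    ∀ v : ℝ, 0 < v →
      ∑' π : {π : X // φ π ≤ v}, ENNReal.ofReal (φ π.1 ^ 2 * w π.1) ≤
        ENNReal.ofReal (2 * K * v) := by
  intro v hv
  set Y := {π : X // φ π ≤ v}
  set f : Y → ℝ → ℝ≥0∞ := fun π =>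
    (Set.Ioc 0 (φ π.1)).indicator (fun s => 2 * ENNReal.ofReal s * ENNReal.ofReal (w π.1))
    with hf
  have hmeas : ∀ π : Y, Measurable (f π) := by
    intro π
    exact ((measurable_const.mul ENNReal.measurable_ofReal).mul
      measurable_const).indicator measurableSet_Ioc
  -- step 1 : each term is an integral
  have key : ∀ π : Y, ENNReal.ofReal (φ π.1 ^ 2 * w π.1) = ∫⁻ s, f π s := by
    intro π
    rw [hf]
    beta_reduce
    rw [lintegral_indicator measurableSet_Ioc]
    have : ∀ s : ℝ, 2 * ENNReal.ofReal s * ENNReal.ofReal (w π.1)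
        = ENNReal.ofReal s * (2 * ENNReal.ofReal (w π.1)) := by
      intro s; ring
    simp_rw [this]
    rw [lintegral_mul_const _ ENNReal.measurable_ofReal,
      layer_cake_aux _ (hφ π.1).le]
    rw [show (2 : ℝ≥0∞) = ENNReal.ofReal 2 by norm_num,
      ← ENNReal.ofReal_mul (by positivity), ← ENNReal.ofReal_mul (by positivity)]
    ring_nf
  -- step 2 : swap sum and integral
  have swap : ∑' π : Y, ENNReal.ofReal (φ π.1 ^ 2 * w π.1)
      = ∫⁻ s, ∑' π : Y, f π s := by
    simp_rw [key]
    exact (lintegral_tsum fun π => (hmeas π).aemeasurable).symm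
  rw [swap]
  -- step 3 : pointwise bound
  have bound : ∀ s : ℝ, (∑' π : Y, f π s) ≤
      (Set.Ioc 0 v).indicator (fun _ => 2 * ENNReal.ofReal K) s := by
    intro s
    by_cases hs : s ∈ Set.Ioc 0 v
    · rw [Set.indicator_of_mem hs]
      set g : X → ℝ≥0∞ := fun π => if s ≤ φ π then ENNReal.ofReal (w π) else 0 with hg
      have hfg : ∀ π : Y, f π s = 2 * ENNReal.ofReal s * g π.1 := by
        intro π
        rw [hf]
        beta_reduce
        by_cases h : s ≤ φ π.1
        · rw [Set.indicator_of_mem (Set.mem_Ioc.mpr ⟨hs.1, h⟩)]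
          simp [hg, h]
        · rw [Set.indicator_of_notMem (fun hc => h (Set.mem_Ioc.mp hc).2)]
          simp [hg, h]
      calc ∑' π : Y, f π s = 2 * ENNReal.ofReal s * ∑' π : Y, g π.1 := by
            simp_rw [hfg]; rw [ENNReal.tsum_mul_left]
        _ ≤ 2 * ENNReal.ofReal s * ∑' π : X, g π := by
            gcongr
            have : ∑' π : Y, g π.1 = ∑' π : X, ({π : X | φ π ≤ v}).indicator g π :=
              tsum_subtype {π : X | φ π ≤ v} g
            rw [this]
            exact ENNReal.tsum_le_tsum fun π => Set.indicator_le_self _ _ _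
        _ = 2 * (ENNReal.ofReal s * ∑' π : {π : X // s ≤ φ π}, ENNReal.ofReal (w π.1)) := by
            rw [mul_assoc]
            congr 1
            congr 1
            rw [show ∑' π : {π : X // s ≤ φ π}, ENNReal.ofReal (w π.1)
                = ∑' π : X, ({π : X | s ≤ φ π}).indicator (fun π => ENNReal.ofReal (w π)) π
                from tsum_subtype {π : X | s ≤ φ π} (fun π => ENNReal.ofReal (w π))]
            exact tsum_congr fun π => by
              simp [hg, Set.indicator_apply, Set.mem_setOf_eq]
        _ ≤ 2 * ENNReal.ofReal K := by gcongr; exact hK s hs.1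
    · rw [Set.indicator_of_notMem hs]
      have : ∀ π : Y, f π s = 0 := by
        intro π
        rw [hf]
        beta_reduce
        rw [Set.indicator_of_notMem]
        intro hc
        exact hs ⟨hc.1, hc.2.trans π.2⟩
      simp [this]
  calc ∫⁻ s, ∑' π : Y, f π s
      ≤ ∫⁻ s, (Set.Ioc 0 v).indicator (fun _ => 2 * ENNReal.ofReal K) s :=
        lintegral_mono bound
    _ = 2 * ENNReal.ofReal K * ENNReal.ofReal v := by
        rw [lintegral_indicator measurableSet_Ioc, lintegral_const,
          Measure.restrict_apply MeasurableSet.univ, Set.univ_inter,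
          Real.volume_Ioc, sub_zero]
    _ ≤ ENNReal.ofReal (2 * K * v) := by
        rcases le_or_gt K 0 with hKn | hKp
        · simp [ENNReal.ofReal_of_nonpos hKn]
        · rw [ENNReal.ofReal_mul (by positivity), ENNReal.ofReal_mul (by norm_num : (0:ℝ) ≤ 2)]
          norm_num
end

section
/- Let q > 0, q ≠ 1. For a half-integer l ≥ 0, define the (2l+1)×(2l+1) matrix σ with entries indexed by m,n ∈ {−l,…,l}: σ_{mn} = √([l−n]_q [l+n+1]_q) if m = n+1 and 0 otherwise, where [x]_q = (q^x − q^{−x})/(q − q^{−1}). Then the weighted Hilbert–Schmidt norm ‖σ‖²_{HS,q} := ∑_{m=−l}^{l} q^{2m} ∑_{n=−l}^{l} |σ_{mn}|² satisfies ‖σ‖²_{HS,q} ≤ C [2l+1]_q² for a constant C depending only on q. -/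
/-- The q-integer `[x]_q = (q^x - q^{-x})/(q - q⁻¹)`. -/
noncomputable def qint (q x : ℝ) : ℝ := (q ^ x - q ^ (-x)) / (q - q⁻¹)

/-!
Every row of `σ` has at most one nonzero entry, and
`[a]_q [b]_q ≤ (q^{a+b} + q^{-(a+b)}) / (q - q⁻¹)²`, so each row contributes at most
`(q^N + q^{-N}) / (q - q⁻¹)²` with `N = 2l + 1`. The weights telescope to `∑_m q^{2m} = [N]_q`,
and `q^N + q^{-N} ≤ (q + q⁻¹) [N]_q` because `(q^N + q^{-N})² = (q - q⁻¹)² [N]_q² + 4` and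
`[N]_q ≥ 1`. Hence `C = (q + q⁻¹) / (q - q⁻¹)²` works.
-/

open Real Finset

lemma sub_inv_ne_zero {q : ℝ} (hq : 0 < q) (hq1 : q ≠ 1) : q - q⁻¹ ≠ 0 := by
  intro h
  have : q * q = 1 := by field_simp at h; nlinarith
  exact hq1 (by nlinarith)

lemma sub_inv_mul_qint {q : ℝ} (hq : 0 < q) (hq1 : q ≠ 1) (x : ℝ) :
    (q - q⁻¹) * qint q x = q ^ x - q ^ (-x) :=
  mul_div_cancel₀ _ (sub_inv_ne_zero hq hq1)

lemma qint_nonneg {q : ℝ} (hq : 0 < q) {x : ℝ} (hx : 0 ≤ x) : 0 ≤ qint q x := by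
  unfold qint
  rcases le_total 1 q with h | h
  · have : q ^ (-x) ≤ q ^ x := rpow_le_rpow_of_exponent_le h (by linarith)
    have : q⁻¹ ≤ 1 := inv_le_one_of_one_le₀ h
    apply div_nonneg <;> linarith
  · have : q ^ x ≤ q ^ (-x) := rpow_le_rpow_of_exponent_ge hq h (by linarith)
    have : 1 ≤ q⁻¹ := (one_le_inv₀ hq).mpr h
    apply div_nonneg_of_nonpos <;> linarith

lemma one_le_qint {q : ℝ} (hq : 0 < q) (hq1 : q ≠ 1) {x : ℝ} (hx : 1 ≤ x) :
    1 ≤ qint q x := by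
  unfold qint
  rcases hq1.lt_or_gt with h | h
  · have : 1 < q⁻¹ := (one_lt_inv₀ hq).mpr h
    have h1 : q ^ x ≤ q ^ (1 : ℝ) := rpow_le_rpow_of_exponent_ge hq h.le hx
    have h2 : q ^ (-1 : ℝ) ≤ q ^ (-x) := rpow_le_rpow_of_exponent_ge hq h.le (by linarith)
    rw [rpow_one] at h1
    rw [rpow_neg_one] at h2
    rw [one_le_div_of_neg (by linarith)]
    linarith
  · have : q⁻¹ < 1 := inv_lt_one_of_one_lt₀ h
    have h1 : q ^ (1 : ℝ) ≤ q ^ x := rpow_le_rpow_of_exponent_le h.le hx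
    have h2 : q ^ (-x) ≤ q ^ (-1 : ℝ) := rpow_le_rpow_of_exponent_le h.le (by linarith)
    rw [rpow_one] at h1
    rw [rpow_neg_one] at h2
    rw [one_le_div (by linarith)]
    linarith

lemma qint_mul_qint_le {q : ℝ} (hq : 0 < q) (a b : ℝ) :
    qint q a * qint q b ≤ (q ^ (a + b) + q ^ (-(a + b))) / (q - q⁻¹) ^ 2 := by
  unfold qint
  rw [div_mul_div_comm, ← sq]
  gcongr ?_ / _
  rw [rpow_add hq, neg_add, rpow_add hq]
  nlinarith [mul_pos (rpow_pos_of_pos hq a) (rpow_pos_of_pos hq (-b)),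
    mul_pos (rpow_pos_of_pos hq (-a)) (rpow_pos_of_pos hq b)]

lemma rpow_add_rpow_neg_le_mul_qint {q : ℝ} (hq : 0 < q) (hq1 : q ≠ 1) {x : ℝ} (hx : 1 ≤ x) :
    q ^ x + q ^ (-x) ≤ (q + q⁻¹) * qint q x := by
  have hQ := one_le_qint hq hq1 hx
  have hprod : q ^ x * q ^ (-x) = 1 := by
    rw [rpow_neg hq.le, mul_inv_cancel₀ (rpow_pos_of_pos hq x).ne']
  have hqq : q * q⁻¹ = 1 := mul_inv_cancel₀ hq.ne'
  rw [← pow_le_pow_iff_left₀ (by positivity) (by positivity) two_ne_zero]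
  calc (q ^ x + q ^ (-x)) ^ 2 = (q ^ x - q ^ (-x)) ^ 2 + 4 * (q ^ x * q ^ (-x)) := by ring
    _ = ((q - q⁻¹) * qint q x) ^ 2 + 4 := by rw [sub_inv_mul_qint hq hq1, hprod, mul_one]
    _ ≤ ((q - q⁻¹) * qint q x) ^ 2 + 4 * qint q x ^ 2 := by nlinarith
    _ = ((q + q⁻¹) * qint q x) ^ 2 := by linear_combination (-4 * qint q x ^ 2) * hqq

lemma sum_rpow_two_mul_sub_half_eq_qint {q : ℝ} (hq : 0 < q) (hq1 : q ≠ 1) (n : ℕ) :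
    ∑ j : Fin (n + 1), q ^ (2 * (((j : ℕ) : ℝ) - (n : ℝ) / 2)) = qint q ((n : ℝ) + 1) := by
  rw [qint, eq_div_iff (sub_inv_ne_zero hq hq1)]
  set f : ℕ → ℝ := fun j => q ^ (2 * (j : ℝ) - n - 1)
  have hstep (j : ℕ) : q ^ (2 * ((j : ℝ) - n / 2)) * (q - q⁻¹) = f (j + 1) - f j := by
    rw [mul_sub, ← rpow_add_one hq.ne', ← div_eq_mul_inv, ← rpow_sub_one hq.ne']
    simp only [f]
    push_cast
    congr 2 <;> ring
  rw [Fin.sum_univ_eq_sum_range (fun j => q ^ (2 * ((j : ℝ) - n / 2))), sum_mul,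
    sum_congr rfl fun j _ => hstep j, sum_range_sub]
  simp only [f]
  push_cast
  congr 2 <;> ring

noncomputable def symbolXPlus (q : ℝ) (n : ℕ) (j k : Fin (n + 1)) : ℝ :=
  if (j : ℕ) = (k : ℕ) + 1 then
    Real.sqrt (qint q ((n : ℝ) / 2 - (((k : ℕ) : ℝ) - (n : ℝ) / 2)) *
      qint q ((n : ℝ) / 2 + (((k : ℕ) : ℝ) - (n : ℝ) / 2) + 1))
  else 0

lemma symbolXPlus_sq_le {q : ℝ} (hq : 0 < q) (n : ℕ) (j k : Fin (n + 1)) :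
    symbolXPlus q n j k ^ 2 ≤ (q ^ ((n : ℝ) + 1) + q ^ (-((n : ℝ) + 1))) / (q - q⁻¹) ^ 2 := by
  unfold symbolXPlus
  split_ifs
  · have hk : ((k : ℕ) : ℝ) ≤ n := by exact_mod_cast Nat.lt_succ_iff.mp k.isLt
    have hk0 : (0 : ℝ) ≤ (k : ℕ) := Nat.cast_nonneg _
    rw [sq_sqrt (mul_nonneg (qint_nonneg hq (by linarith)) (qint_nonneg hq (by linarith)))]
    have hsum : (n : ℝ) / 2 - ((k : ℕ) - (n : ℝ) / 2) + ((n : ℝ) / 2 + ((k : ℕ) - (n : ℝ) / 2) + 1)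
        = n + 1 := by ring
    simpa only [hsum] using qint_mul_qint_le hq ((n : ℝ) / 2 - ((k : ℕ) - (n : ℝ) / 2))
      ((n : ℝ) / 2 + ((k : ℕ) - (n : ℝ) / 2) + 1)
  · rw [zero_pow two_ne_zero]
    positivity

lemma sum_symbolXPlus_sq_le {q : ℝ} (hq : 0 < q) (n : ℕ) (j : Fin (n + 1)) :
    ∑ k : Fin (n + 1), symbolXPlus q n j k ^ 2
      ≤ (q ^ ((n : ℝ) + 1) + q ^ (-((n : ℝ) + 1))) / (q - q⁻¹) ^ 2 := by
  set K := (q ^ ((n : ℝ) + 1) + q ^ (-((n : ℝ) + 1))) / (q - q⁻¹) ^ 2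
  have hK : 0 ≤ K := by positivity
  have hsupp : ∀ k ∈ univ, symbolXPlus q n j k ^ 2 ≠ 0 → (j : ℕ) = (k : ℕ) + 1 := by
    intro k _ hk
    by_contra h
    simp [symbolXPlus, h] at hk
  set S : Finset (Fin (n + 1)) := {k | (j : ℕ) = (k : ℕ) + 1}
  have hS : #S ≤ 1 :=
    card_le_one.mpr fun a ha b hb => by
      simp only [S, mem_filter, mem_univ, true_and] at ha hb
      exact Fin.ext (by omega)
  calc ∑ k : Fin (n + 1), symbolXPlus q n j k ^ 2
      = ∑ k ∈ S, symbolXPlus q n j k ^ 2 := (sum_filter_of_ne hsupp).symm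
    _ ≤ #S • K :=
      sum_le_card_nsmul _ _ _ fun k _ => symbolXPlus_sq_le hq n j k
    _ ≤ 1 • K := nsmul_le_nsmul_left hK hS
    _ = K := one_nsmul K

/-- Spin `l = n / 2`: the paper's indices `m, n ∈ {−l,…,l}` are `j − l` and `k − l`
for `j k : Fin (n + 1)`. -/
theorem symbol_Xplus_HS_bound (q : ℝ) (hq : 0 < q) (hq1 : q ≠ 1) :
    ∃ C > (0 : ℝ), ∀ n : ℕ,
      (∑ j : Fin (n + 1), q ^ (2 * (((j : ℕ) : ℝ) - (n : ℝ) / 2)) *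
        ∑ k : Fin (n + 1),
          (if (j : ℕ) = (k : ℕ) + 1 then
              Real.sqrt (qint q ((n : ℝ) / 2 - (((k : ℕ) : ℝ) - (n : ℝ) / 2)) *
                qint q ((n : ℝ) / 2 + (((k : ℕ) : ℝ) - (n : ℝ) / 2) + 1))
            else 0) ^ 2)
        ≤ C * qint q ((n : ℝ) + 1) ^ 2 := by
  have hD : 0 < (q - q⁻¹) ^ 2 := pow_two_pos_of_ne_zero (sub_inv_ne_zero hq hq1)
  refine ⟨(q + q⁻¹) / (q - q⁻¹) ^ 2, div_pos (by positivity) hD, fun n => ?_⟩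
  have hN : (1 : ℝ) ≤ n + 1 := by simp
  calc ∑ j : Fin (n + 1), q ^ (2 * (((j : ℕ) : ℝ) - (n : ℝ) / 2)) * ∑ k, symbolXPlus q n j k ^ 2
      ≤ ∑ j : Fin (n + 1), q ^ (2 * (((j : ℕ) : ℝ) - (n : ℝ) / 2)) *
          ((q ^ ((n : ℝ) + 1) + q ^ (-((n : ℝ) + 1))) / (q - q⁻¹) ^ 2) := by
        gcongr with j
        exact sum_symbolXPlus_sq_le hq n j
    _ = qint q (n + 1) * ((q ^ ((n : ℝ) + 1) + q ^ (-((n : ℝ) + 1))) / (q - q⁻¹) ^ 2) := by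
        rw [← sum_mul, sum_rpow_two_mul_sub_half_eq_qint hq hq1]
    _ ≤ qint q (n + 1) * ((q + q⁻¹) * qint q (n + 1) / (q - q⁻¹) ^ 2) := by
        gcongr
        · exact qint_nonneg hq (by positivity)
        · exact rpow_add_rpow_neg_le_mul_qint hq hq1 hN
    _ = (q + q⁻¹) / (q - q⁻¹) ^ 2 * qint q (n + 1) ^ 2 := by ring
end
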